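/- For every tree T and every vertex v of T, 1/(1 + d(v)) ≤ M(T - v)/M(T) ≤ 1, where d(v) is the degree of v and M denotes the number of matchings. -/

import Mathlib

open Finset Polynomial

namespace AvgMatching

variable {V : Type*} [Fintype V] [DecidableEq V]

/-- A matching of `G`, viewed as a finite set of edges of `G`
no two of which share a vertex. -/
def IsMatchingSet (G : SimpleGraph V) (A : Finset (Sym2 V)) : Prop :=
  ↑A ⊆ G.edgeSet ∧ (A : Set (Sym2 V)).Pairwise fun e f => ∀ v : V, v ∈ e → v ∉ f

open Classical in
/-- The finite set of all matchings of `G` (including the empty matching). -/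
noncomputable def matchings (G : SimpleGraph V) : Finset (Finset (Sym2 V)) :=
  Finset.univ.filter (IsMatchingSet G)

/-- `M(G)`: the number of matchings of `G` (including the empty one). -/
noncomputable def numM (G : SimpleGraph V) : ℕ := (matchings G).card

/-- `S(G)`: the sum of the sizes of all matchings of `G`. -/
noncomputable def totS (G : SimpleGraph V) : ℕ := ∑ A ∈ matchings G, A.card

/-- `avm(G) = S(G)/M(G)`: the average size of a matching of `G`. -/
noncomputable def avm (G : SimpleGraph V) : ℚ := (totS G : ℚ) / (numM G)

/-- `m(G,k)`: the number of matchings of size `k` in `G`. -/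
noncomputable def mCount (G : SimpleGraph V) (k : ℕ) : ℕ :=
  ((matchings G).filter fun A => A.card = k).card

/-- `μ(G)`: the matching number of `G`. -/
noncomputable def matchNum (G : SimpleGraph V) : ℕ := (matchings G).sup Finset.card

/-- Delete a vertex `u` (keeping it as an isolated vertex, which does not
affect matchings): all edges incident to `u` are removed. -/
def delVert (G : SimpleGraph V) (u : V) : SimpleGraph V :=
  G.deleteEdges {e : Sym2 V | u ∈ e}

open Classical

lemma mem_matchings {G : SimpleGraph V} {A : Finset (Sym2 V)} :
    A ∈ matchings G ↔ IsMatchingSet G A := by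
  simp [matchings]

lemma empty_mem_matchings (G : SimpleGraph V) : (∅ : Finset (Sym2 V)) ∈ matchings G := by
  rw [mem_matchings]
  exact ⟨by simp, by simp⟩

lemma numM_pos (G : SimpleGraph V) : 0 < numM G :=
  Finset.card_pos.2 ⟨∅, empty_mem_matchings G⟩

lemma matchings_delVert_subset (G : SimpleGraph V) (v : V) :
    matchings (delVert G v) ⊆ matchings G := by
  intro A hA
  rw [mem_matchings] at *
  refine ⟨?_, hA.2⟩
  refine hA.1.trans ?_
  rw [delVert, SimpleGraph.edgeSet_deleteEdges]
  exact Set.diff_subset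

lemma mem_matchings_delVert {G : SimpleGraph V} {v : V} {A : Finset (Sym2 V)} :
    A ∈ matchings (delVert G v) ↔ A ∈ matchings G ∧ ∀ e ∈ A, v ∉ e := by
  constructor
  · intro hA
    refine ⟨matchings_delVert_subset G v hA, ?_⟩
    intro e he
    have := (mem_matchings.1 hA).1 he
    rw [delVert, SimpleGraph.edgeSet_deleteEdges] at this
    exact this.2
  · rintro ⟨hA, hv⟩
    rw [mem_matchings] at *
    refine ⟨?_, hA.2⟩
    intro e he
    rw [delVert, SimpleGraph.edgeSet_deleteEdges]
    exact ⟨hA.1 he, hv e (by exact_mod_cast he)⟩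

lemma numM_le (G : SimpleGraph V) [DecidableRel G.Adj] (v : V) :
    numM G ≤ (1 + G.degree v) * numM (delVert G v) := by
  classical
  -- split matchings of G by whether they cover v
  have hsplit :
      numM G = ((matchings G).filter (fun A => ∀ e ∈ A, v ∉ e)).card +
        ((matchings G).filter (fun A => ¬ ∀ e ∈ A, v ∉ e)).card :=
    (Finset.card_filter_add_card_filter_not _).symm
  have h1 : (matchings G).filter (fun A => ∀ e ∈ A, v ∉ e) = matchings (delVert G v) := by
    ext A
    simp only [Finset.mem_filter, mem_matchings_delVert]
  -- matchings covering v
  have h2 : ((matchings G).filter (fun A => ¬ ∀ e ∈ A, v ∉ e)).card ≤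
      G.degree v * numM (delVert G v) := by
    have hsub : (matchings G).filter (fun A => ¬ ∀ e ∈ A, v ∉ e) ⊆
        (G.incidenceFinset v).biUnion (fun e => (matchings G).filter (fun A => e ∈ A)) := by
      intro A hA
      rw [Finset.mem_filter] at hA
      push_neg at hA
      obtain ⟨hAm, e, heA, hev⟩ := hA
      refine Finset.mem_biUnion.2 ⟨e, ?_, Finset.mem_filter.2 ⟨hAm, heA⟩⟩
      rw [SimpleGraph.mem_incidenceFinset]
      exact ⟨(mem_matchings.1 hAm).1 heA, hev⟩
    calc ((matchings G).filter (fun A => ¬ ∀ e ∈ A, v ∉ e)).card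
        ≤ ((G.incidenceFinset v).biUnion
            (fun e => (matchings G).filter (fun A => e ∈ A))).card :=
          Finset.card_le_card hsub
      _ ≤ ∑ e ∈ G.incidenceFinset v, ((matchings G).filter (fun A => e ∈ A)).card :=
          Finset.card_biUnion_le
      _ ≤ ∑ _e ∈ G.incidenceFinset v, numM (delVert G v) := by
          refine Finset.sum_le_sum ?_
          intro e he
          rw [SimpleGraph.mem_incidenceFinset] at he
          obtain ⟨heE, hev⟩ := he
          -- inject via erasing e
          refine Finset.card_le_card_of_injOn (fun A => A.erase e) ?_ ?_
          · intro A hA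
            rw [Finset.mem_coe, Finset.mem_filter] at hA
            obtain ⟨hAm, heA⟩ := hA
            rw [mem_matchings] at hAm
            rw [Finset.mem_coe, mem_matchings_delVert]
            constructor
            · rw [mem_matchings]
              refine ⟨fun f hf => hAm.1 (by
                  have := Finset.mem_of_mem_erase (by exact_mod_cast hf)
                  exact_mod_cast this), ?_⟩
              exact hAm.2.mono (by exact_mod_cast Finset.erase_subset e A)
            · intro f hf
              have hfA := Finset.mem_of_mem_erase hf
              have hfe : f ≠ e := Finset.ne_of_mem_erase hf
              exact hAm.2 (by exact_mod_cast heA) (by exact_mod_cast hfA) hfe.symm v hev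
          · intro A hA B hB hAB
            simp only [Finset.mem_coe, Finset.mem_filter] at hA hB
            have : insert e (A.erase e) = insert e (B.erase e) := by
              simp only at hAB; rw [hAB]
            rwa [Finset.insert_erase hA.2, Finset.insert_erase hB.2] at this
      _ = G.degree v * numM (delVert G v) := by
          rw [Finset.sum_const, smul_eq_mul, SimpleGraph.card_incidenceFinset_eq_degree]
  calc numM G = numM (delVert G v) +
      ((matchings G).filter (fun A => ¬ ∀ e ∈ A, v ∉ e)).card := by rw [hsplit, h1]; rfl
    _ ≤ numM (delVert G v) + G.degree v * numM (delVert G v) := by omega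
    _ = (1 + G.degree v) * numM (delVert G v) := by ring

theorem tree_numM_delVert_ratio (G : SimpleGraph V) [DecidableRel G.Adj]
    (hT : G.IsTree) (v : V) :
    (1 : ℚ) / (1 + G.degree v) ≤ (numM (delVert G v) : ℚ) / (numM G : ℚ) ∧
      (numM (delVert G v) : ℚ) / (numM G : ℚ) ≤ 1 := by
  have hBpos : (0 : ℚ) < (numM G : ℚ) := by exact_mod_cast numM_pos G
  have hdpos : (0 : ℚ) < 1 + (G.degree v : ℚ) := by positivity
  constructor
  · rw [div_le_div_iff₀ hdpos hBpos]
    have := numM_le G v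
    have : (numM G : ℚ) ≤ (1 + G.degree v) * (numM (delVert G v) : ℚ) := by
      exact_mod_cast this
    linarith
  · rw [div_le_one hBpos]
    exact_mod_cast Finset.card_le_card (matchings_delVert_subset G v)

end AvgMatching
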